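/- Let Σ be a finite nonempty alphabet and let β be the 2×2 array pattern with four pairwise distinct variables, β = [x₁ x₂; x₃ x₄]. Then for every z ∈ {p, r, c, rc}, L_{Σ,h}(β) ≠ L_{Σ,z}(β). -/

import Mathlib

/-- A nonempty rectangular two-dimensional word (array) over `σ`. -/
structure Arr (σ : Type) : Type where
  rows : ℕ
  cols : ℕ
  rows_pos : 0 < rows
  cols_pos : 0 < cols
  entry : Fin rows → Fin cols → σ

namespace Arr

variable {σ γ : Type}

/-- Column concatenation: place `V` to the right of `U`; `none` if heights differ. -/
def colCat (U V : Arr σ) : Option (Arr σ) :=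
  if h : U.rows = V.rows then
    some { rows := U.rows
           cols := U.cols + V.cols
           rows_pos := U.rows_pos
           cols_pos := by have := U.cols_pos; omega
           entry := fun i j =>
             if hj : (j : ℕ) < U.cols then U.entry i ⟨j, hj⟩
             else V.entry (Fin.cast h i) ⟨(j : ℕ) - U.cols, by have := j.isLt; omega⟩ }
  else none

/-- Row concatenation: place `V` below `U`; `none` if widths differ. -/
def rowCat (U V : Arr σ) : Option (Arr σ) :=
  if h : U.cols = V.cols then
    some { rows := U.rows + V.rows
           cols := U.cols
           rows_pos := by have := U.rows_pos; omega
           cols_pos := U.cols_pos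
           entry := fun i j =>
             if hi : (i : ℕ) < U.rows then U.entry ⟨i, hi⟩ j
             else V.entry ⟨(i : ℕ) - U.rows, by have := i.isLt; omega⟩ (Fin.cast h j) }
  else none

/-- A two-dimensional morphism: compatible with both concatenations,
with "both sides undefined" counting as equal. -/
def IsMorphism (h : Arr σ → Arr γ) : Prop :=
  (∀ V W : Arr σ, Option.map h (colCat V W) = colCat (h V) (h W)) ∧
  (∀ V W : Arr σ, Option.map h (rowCat V W) = rowCat (h V) (h W))

/-- Concatenate a nonempty list of (possibly undefined) arrays with the
given partial concatenation operation; `none` on the empty list. -/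
def catListO (op : Arr σ → Arr σ → Option (Arr σ)) : List (Option (Arr σ)) → Option (Arr σ)
  | [] => none
  | [a] => a
  | a :: b :: rest => a.bind fun x => (catListO op (b :: rest)).bind fun y => op x y

/-- `g_{⦶,⊖}`: substitute and assemble, first column-concatenating each row,
then row-concatenating the rows. -/
def subCR {X : Type} (g : X → Arr σ) (α : Arr X) : Option (Arr σ) :=
  catListO rowCat (List.ofFn fun i : Fin α.rows =>
    catListO colCat (List.ofFn fun j : Fin α.cols => some (g (α.entry i j))))

/-- `g_{⊖,⦶}`: substitute and assemble, first row-concatenating each column,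
then column-concatenating the columns. -/
def subRC {X : Type} (g : X → Arr σ) (α : Arr X) : Option (Arr σ) :=
  catListO colCat (List.ofFn fun j : Fin α.cols =>
    catListO rowCat (List.ofFn fun i : Fin α.rows => some (g (α.entry i j))))

/-- A substitution is uniform if all images have the same dimensions. -/
def Uniform {X : Type} (g : X → Arr σ) : Prop :=
  ∃ m n : ℕ, ∀ x : X, (g x).rows = m ∧ (g x).cols = n

end Arr

open Arr

/-- The five modes of array pattern languages. -/
inductive Mode | h | p | r | c | rc
deriving DecidableEq

/-- The array pattern language of an array pattern (an array over the
variables `ℕ`) in each mode. -/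
def langOf (σ : Type) : Mode → Arr ℕ → Set (Arr σ)
  | Mode.h, α => {W | ∃ g : Arr ℕ → Arr σ, IsMorphism g ∧ g α = W}
  | Mode.p, α => {W | ∃ s : ℕ → Arr σ, subCR s α = some W ∧ subRC s α = some W}
  | Mode.r, α => {W | ∃ s : ℕ → Arr σ, subCR s α = some W}
  | Mode.c, α => {W | ∃ s : ℕ → Arr σ, subRC s α = some W}
  | Mode.rc, α =>
      {W | ∃ s : ℕ → Arr σ, subCR s α = some W} ∪ {W | ∃ s : ℕ → Arr σ, subRC s α = some W}

/-- The 2×2 array pattern `[x₁ x₂; x₃ x₄]` with four pairwise distinct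
variables. -/
def beta4 : Arr ℕ :=
  ⟨2, 2, by norm_num, by norm_num, fun i j => 2 * (i : ℕ) + (j : ℕ)⟩

/-! A two-dimensional morphism `g` sends arrays of equal width to arrays of equal width, since
`U ⊖ V` is defined exactly when `U` and `V` have the same width and `g` preserves definedness.
Splitting `β` into its two columns `[x₁; x₃] ⦶ [x₂; x₄]`, both of width one, shows that every
morphic image of `β` has even width. On the other hand `x₁, x₃ ↦ [a]`, `x₂, x₄ ↦ [a a]` is a
proper substitution whose image is the constant `2 × 3` array, which therefore lies in every
other pattern language of `β`. -/

namespace Arr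

variable {σ γ : Type}

theorem ext_entry {U V : Arr σ} (hr : U.rows = V.rows) (hc : U.cols = V.cols)
    (he : ∀ (i j : ℕ) (hi : i < U.rows) (hj : j < U.cols),
      U.entry ⟨i, hi⟩ ⟨j, hj⟩ = V.entry ⟨i, hr ▸ hi⟩ ⟨j, hc ▸ hj⟩) : U = V := by
  obtain ⟨ur, uc, hur, huc, ue⟩ := U
  obtain ⟨vr, vc, hvr, hvc, ve⟩ := V
  dsimp only at hr hc he
  subst hr hc
  simp only [Arr.mk.injEq, heq_eq_eq, true_and]
  funext i j
  exact he i j i.isLt j.isLt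

theorem cols_of_colCat_eq_some {U V W : Arr σ} (h : colCat U V = some W) :
    W.cols = U.cols + V.cols := by
  unfold colCat at h
  split at h
  · cases h; rfl
  · cases h

theorem rowCat_isSome_iff {U V : Arr σ} : (rowCat U V).isSome ↔ U.cols = V.cols := by
  unfold rowCat
  split <;> simp_all

theorem IsMorphism.colCat_eq_some {g : Arr σ → Arr γ} (hg : IsMorphism g) {U V W : Arr σ}
    (h : colCat U V = some W) : colCat (g U) (g V) = some (g W) := by
  rw [← hg.1, h, Option.map_some]

theorem IsMorphism.cols_eq_of_cols_eq {g : Arr σ → Arr γ} (hg : IsMorphism g) {U V : Arr σ}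
    (h : U.cols = V.cols) : (g U).cols = (g V).cols := by
  rw [← rowCat_isSome_iff, ← hg.2, Option.isSome_map, rowCat_isSome_iff.2 h]

theorem IsMorphism.even_cols_of_colCat_eq_some {g : Arr σ → Arr γ} (hg : IsMorphism g)
    {U V W : Arr σ} (h : colCat U V = some W) (hUV : U.cols = V.cols) : Even (g W).cols := by
  rw [cols_of_colCat_eq_some (hg.colCat_eq_some h), hg.cols_eq_of_cols_eq hUV]
  exact ⟨_, rfl⟩

def const (a : σ) (m n : ℕ) (hm : 0 < m) (hn : 0 < n) : Arr σ :=
  ⟨m, n, hm, hn, fun _ _ => a⟩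

theorem colCat_const (a : σ) {m n n' : ℕ} (hm : 0 < m) (hn : 0 < n) (hn' : 0 < n') :
    colCat (const a m n hm hn) (const a m n' hm hn') =
      some (const a m (n + n') hm (Nat.add_pos_left hn n')) := by
  rw [colCat, dif_pos (show (const a m n hm hn).rows = (const a m n' hm hn').rows from rfl)]
  congr with i j
  split <;> rfl

theorem rowCat_const (a : σ) {m m' n : ℕ} (hm : 0 < m) (hm' : 0 < m') (hn : 0 < n) :
    rowCat (const a m n hm hn) (const a m' n hm' hn) =
      some (const a (m + m') n (Nat.add_pos_left hm m') hn) := by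
  rw [rowCat, dif_pos (show (const a m n hm hn).cols = (const a m' n hm' hn).cols from rfl)]
  congr with i j
  split <;> rfl

end Arr

theorem mem_langOf_of_subCR_eq_subRC {σ : Type} {z : Mode} (hz : z ≠ Mode.h) {α : Arr ℕ}
    {s : ℕ → Arr σ} {W : Arr σ} (hr : subCR s α = some W) (hc : subRC s α = some W) :
    W ∈ langOf σ z α := by
  cases z with
  | h => exact absurd rfl hz
  | p => exact ⟨s, hr, hc⟩
  | r => exact ⟨s, hr⟩
  | c => exact ⟨s, hc⟩
  | rc => exact Or.inl ⟨s, hr⟩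

theorem subCR_beta4 {σ : Type} (s : ℕ → Arr σ) :
    subCR s beta4 =
      (colCat (s 0) (s 1)).bind fun u => (colCat (s 2) (s 3)).bind fun v => rowCat u v := by
  rfl

theorem subRC_beta4 {σ : Type} (s : ℕ → Arr σ) :
    subRC s beta4 =
      (rowCat (s 0) (s 2)).bind fun u => (rowCat (s 1) (s 3)).bind fun v => colCat u v := by
  rfl

theorem colCat_columns_beta4 :
    colCat ⟨2, 1, two_pos, one_pos, fun i _ => 2 * (i : ℕ)⟩
      ⟨2, 1, two_pos, one_pos, fun i _ => 2 * (i : ℕ) + 1⟩ = some beta4 := by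
  unfold colCat
  rw [dif_pos rfl, Option.some_inj]
  refine ext_entry rfl rfl fun i j _ hj => ?_
  dsimp only [beta4] at hj ⊢
  split_ifs <;> simp <;> omega

theorem even_cols_of_mem_langOf_h_beta4 {σ : Type} {W : Arr σ}
    (hW : W ∈ langOf σ Mode.h beta4) : Even W.cols := by
  obtain ⟨g, hg, rfl⟩ := hW
  exact hg.even_cols_of_colCat_eq_some colCat_columns_beta4 rfl

theorem stmt4_general {σ : Type} [Nonempty σ] (z : Mode) (hz : z ≠ Mode.h) :
    langOf σ Mode.h beta4 ≠ langOf σ z beta4 := by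
  intro hlang
  obtain ⟨a⟩ := ‹Nonempty σ›
  let s : ℕ → Arr σ := fun k => const a 1 (k % 2 + 1) one_pos (Nat.succ_pos _)
  have hr : subCR s beta4 = some (const a 2 3 two_pos three_pos) := by
    simp [subCR_beta4, s, colCat_const, rowCat_const]
  have hc : subRC s beta4 = some (const a 2 3 two_pos three_pos) := by
    simp [subRC_beta4, s, colCat_const, rowCat_const]
  have hmem := mem_langOf_of_subCR_eq_subRC hz hr hc
  rw [← hlang] at hmem
  exact absurd (even_cols_of_mem_langOf_h_beta4 hmem) (by decide : ¬Even 3)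

/-- for every mode `z ∈ {p, r, c, rc}`, the `h` pattern language
of `β = [x₁ x₂; x₃ x₄]` differs from its `z` pattern language. -/
theorem stmt4 {σ : Type} [Fintype σ] [Nonempty σ] (z : Mode) (hz : z ≠ Mode.h) :
    langOf σ Mode.h beta4 ≠ langOf σ z beta4 :=
  stmt4_general z hz
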